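/- Let R be a finite set and Q : Fin m → Finset R a family of m subsets of R whose union is all of R, with 1 ≤ k' ≤ m. Then the minimum, over subfamilies of k' of the sets Q_i, of the cardinality of their union equals the least natural number a such that there exists a subset R' ⊆ R with |R'| = a that contains (covers) at least k' of the sets Q_i. (Correctness of the reduction from k-element cover to minimum k-set coverage, Theorem 1.) -/

import Mathlib

open Finset

section Cover

variable {ι α : Type*} [Fintype ι] [DecidableEq α] (Q : ι → Finset α)

theorem subset_filter_subset_biUnion (s : Finset ι) :
    s ⊆ univ.filter (fun i => Q i ⊆ s.biUnion Q) := fun i hi =>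
  mem_filter.2 ⟨mem_univ i, subset_biUnion_of_mem Q hi⟩

theorem exists_card_eq_biUnion_subset_of_le_card_filter {R' : Finset α} {k : ℕ}
    (hk : k ≤ (univ.filter (fun i => Q i ⊆ R')).card) :
    ∃ s : Finset ι, s.card = k ∧ s.biUnion Q ⊆ R' := by
  obtain ⟨s, hs, rfl⟩ := exists_subset_card_eq hk
  exact ⟨s, rfl, biUnion_subset.2 fun i hi => (mem_filter.1 (hs hi)).2⟩

end Cover

theorem stmt_0_general {α : Type*} [DecidableEq α] {m : ℕ} (R : Finset α)
    (Q : Fin m → Finset α)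
    (hUnion : Finset.univ.biUnion Q = R)
    (k' : ℕ) (hk2 : k' ≤ m) :
    IsLeast {a : ℕ | ∃ R' ⊆ R, R'.card = a ∧
        k' ≤ (Finset.univ.filter (fun i => Q i ⊆ R')).card}
      (sInf {a : ℕ | ∃ s : Finset (Fin m), s.card = k' ∧ (s.biUnion Q).card = a}) := by
  set A := {a : ℕ | ∃ s : Finset (Fin m), s.card = k' ∧ (s.biUnion Q).card = a}
  have hA : A.Nonempty := by
    obtain ⟨s, -, hs⟩ := exists_subset_card_eq (s := (univ : Finset (Fin m)))
      (by simpa using hk2)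
    exact ⟨_, s, hs, rfl⟩
  obtain ⟨s₀, hs₀, hmin⟩ : sInf A ∈ A := Nat.sInf_mem hA
  refine ⟨⟨s₀.biUnion Q, hUnion ▸ biUnion_subset_biUnion_of_subset_left Q (subset_univ s₀),
    hmin, hs₀ ▸ card_le_card (subset_filter_subset_biUnion Q s₀)⟩, ?_⟩
  rintro a ⟨R', -, rfl, hcov⟩
  obtain ⟨s, hs, hsR'⟩ := exists_card_eq_biUnion_subset_of_le_card_filter Q hcov
  exact (Nat.sInf_le (s := A) ⟨s, hs, rfl⟩).trans (card_le_card hsR')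

/-- Theorem 1 (correctness of the reduction): the minimum k'-set coverage value,
i.e. the minimum over subfamilies of k' of the sets `Q i` of the cardinality of
their union, is the least natural number `a` such that there exists a subset
`R' ⊆ R` with `|R'| = a` covering (containing) at least `k'` of the sets `Q i`. -/
theorem stmt_0 {α : Type*} [DecidableEq α] {m : ℕ} (R : Finset α)
    (Q : Fin m → Finset α)
    (hUnion : Finset.univ.biUnion Q = R)
    (k' : ℕ) (hk1 : 1 ≤ k') (hk2 : k' ≤ m) :
    IsLeast {a : ℕ | ∃ R' ⊆ R, R'.card = a ∧
        k' ≤ (Finset.univ.filter (fun i => Q i ⊆ R')).card}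
      (sInf {a : ℕ | ∃ s : Finset (Fin m), s.card = k' ∧ (s.biUnion Q).card = a}) :=
  stmt_0_general R Q hUnion k' hk2
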